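/- Let d ≥ 1 and let f : EuclideanSpace ℝ (Fin d) → EuclideanSpace ℝ (Fin d) → ℝ satisfy f x θ = f x θ₀ + ⟪θ - θ₀, x⟫ for all x, θ and a fixed θ₀. Let τ₁, …, τ_T be task vectors and D₁, …, D_T ⊆ EuclideanSpace ℝ (Fin d) be task supports. Assume orthogonality between task vectors and foreign data points: for every t and every x ∈ D_{t'} with t' ≠ t, ⟪τ_t, x⟫ = 0, and for every x ∉ ⋃_{t} D_t, ⟪τ_t, x⟫ = 0 for all t. Then f is weight disentangled with respect to {τ_t} and {D_t}: for all coefficients α₁, …, α_T ∈ ℝ, if x ∈ D_t then f x (θ₀ + ∑_{s=1}^T α_s • τ_s) = f x (θ₀ + α_t • τ_t), and if x ∉ ⋃_{t} D_t then f x (θ₀ + ∑_{s=1}^T α_s • τ_s) = f x θ₀. -/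

import Mathlib

open scoped RealInnerProductSpace

section

variable {E ι : Type*} [NormedAddCommGroup E] [InnerProductSpace ℝ E] [Fintype ι]

theorem real_inner_sum_smul_left_eq_single (τ : ι → E) (α : ι → ℝ) (x : E) (t : ι)
    (h : ∀ s ≠ t, ⟪τ s, x⟫ = 0) : ⟪∑ s, α s • τ s, x⟫ = ⟪α t • τ t, x⟫ := by
  rw [sum_inner, Finset.sum_eq_single_of_mem t (Finset.mem_univ t)]
  intro s _ hs
  rw [real_inner_smul_left, h s hs, mul_zero]

theorem real_inner_sum_smul_left_eq_zero (τ : ι → E) (α : ι → ℝ) (x : E)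
    (h : ∀ s, ⟪τ s, x⟫ = 0) : ⟪∑ s, α s • τ s, x⟫ = 0 := by
  rw [sum_inner]
  exact Finset.sum_eq_zero fun s _ ↦ by rw [real_inner_smul_left, h s, mul_zero]

theorem apply_add_eq_of_linear_model {f : E → ℝ} {θ₀ x : E}
    (hf : ∀ θ, f θ = f θ₀ + ⟪θ - θ₀, x⟫) (v : E) : f (θ₀ + v) = f θ₀ + ⟪v, x⟫ := by
  rw [hf, add_sub_cancel_left]

end

theorem linear_model_orthogonality_implies_weight_disentanglement_general
    (d : ℕ)
    (f : EuclideanSpace ℝ (Fin d) → EuclideanSpace ℝ (Fin d) → ℝ)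
    (θ₀ : EuclideanSpace ℝ (Fin d))
    (hf : ∀ x θ, f x θ = f x θ₀ + ⟪θ - θ₀, x⟫)
    (T : ℕ) (τ : Fin T → EuclideanSpace ℝ (Fin d))
    (D : Fin T → Set (EuclideanSpace ℝ (Fin d)))
    (horth : ∀ t t' : Fin T, t' ≠ t → ∀ x ∈ D t', ⟪τ t, x⟫ = 0)
    (hout : ∀ x, x ∉ ⋃ t, D t → ∀ t, ⟪τ t, x⟫ = 0)
    (α : Fin T → ℝ) (x : EuclideanSpace ℝ (Fin d)) :
    (∀ t, x ∈ D t → f x (θ₀ + ∑ s, α s • τ s) = f x (θ₀ + α t • τ t)) ∧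
    (x ∉ ⋃ t, D t → f x (θ₀ + ∑ s, α s • τ s) = f x θ₀) := by
  refine ⟨fun t hx ↦ ?_, fun hx ↦ ?_⟩
  · rw [apply_add_eq_of_linear_model (hf x), apply_add_eq_of_linear_model (hf x),
      real_inner_sum_smul_left_eq_single τ α x t fun s hs ↦ horth s t hs.symm x hx]
  · rw [apply_add_eq_of_linear_model (hf x),
      real_inner_sum_smul_left_eq_zero τ α x (hout x hx), add_zero]

/-- For a linear representation model, orthogonality between each task vector
`τ_t` and the data points of all other tasks (and of points outside all
supports) implies weight disentanglement with respect to `{τ_t}` and `{D_t}`. -/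
theorem linear_model_orthogonality_implies_weight_disentanglement
    (d : ℕ) (hd : 1 ≤ d)
    (f : EuclideanSpace ℝ (Fin d) → EuclideanSpace ℝ (Fin d) → ℝ)
    (θ₀ : EuclideanSpace ℝ (Fin d))
    (hf : ∀ x θ, f x θ = f x θ₀ + ⟪θ - θ₀, x⟫)
    (T : ℕ) (τ : Fin T → EuclideanSpace ℝ (Fin d))
    (D : Fin T → Set (EuclideanSpace ℝ (Fin d)))
    (horth : ∀ t t' : Fin T, t' ≠ t → ∀ x ∈ D t', ⟪τ t, x⟫ = 0)
    (hout : ∀ x, x ∉ ⋃ t, D t → ∀ t, ⟪τ t, x⟫ = 0)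
    (α : Fin T → ℝ) (x : EuclideanSpace ℝ (Fin d)) :
    (∀ t, x ∈ D t → f x (θ₀ + ∑ s, α s • τ s) = f x (θ₀ + α t • τ t)) ∧
    (x ∉ ⋃ t, D t → f x (θ₀ + ∑ s, α s • τ s) = f x θ₀) :=
  linear_model_orthogonality_implies_weight_disentanglement_general d f θ₀ hf T τ D horth hout α x
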